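/- Strong amalgamation over immersions with homomorphisms: let T be an h-inductive theory and A, B, C models of T with immersions f : A → B and g : A → C. Then there exist a model D of T and homomorphisms f' : B → D, g' : C → D with f' ∘ f = g' ∘ g, and such that for all b ∈ B \ f(A) and c ∈ C \ g(A), f'(b) ≠ g'(c). -/

import Mathlib

open FirstOrder FirstOrder.Language

universe u v w w'

namespace PositiveLogic

/-- Positive formulas with `n` free variables: built from `⊥`, atomic formulas,
`∧`, `∨` and `∃`. -/
inductive PosForm (L : FirstOrder.Language.{u, v}) : ℕ → Type (max u v)
  | falsum {n : ℕ} : PosForm L n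
  | equal {n : ℕ} (t u : L.Term (Fin n)) : PosForm L n
  | rel {n l : ℕ} (R : L.Relations l) (ts : Fin l → L.Term (Fin n)) : PosForm L n
  | and {n : ℕ} (φ ψ : PosForm L n) : PosForm L n
  | or {n : ℕ} (φ ψ : PosForm L n) : PosForm L n
  | ex {n : ℕ} (φ : PosForm L (n + 1)) : PosForm L n

variable {L : FirstOrder.Language.{u, v}}

/-- Realization of a positive formula in a structure. -/
def PosForm.Realize {M : Type w} [L.Structure M] :
    ∀ {n : ℕ}, PosForm L n → (Fin n → M) → Prop
  | _, .falsum, _ => False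
  | _, .equal t u, v => t.realize v = u.realize v
  | _, .rel R ts, v => Structure.RelMap R fun i => (ts i).realize v
  | _, .and φ ψ, v => φ.Realize v ∧ ψ.Realize v
  | _, .or φ ψ, v => φ.Realize v ∨ ψ.Realize v
  | _, .ex φ, v => ∃ x : M, φ.Realize (Fin.snoc v x)

/-- A positive sentence `φ` (element of `PosForm L 0`) holds in `M`. -/
def PosRealize (M : Type w) [L.Structure M] (φ : PosForm L 0) : Prop :=
  φ.Realize (Fin.elim0 : Fin 0 → M)

/-- `Diag⁺*(M)`: the set of positive `L`-sentences true in `M`. -/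
def posTheory (M : Type w) [L.Structure M] : Set (PosForm L 0) :=
  {φ | PosRealize M φ}

/-- `T_u*(M)`, identified with the set of positive `L`-sentences whose negation
(an h-universal sentence) is true in `M`. -/
def TuStar (M : Type w) [L.Structure M] : Set (PosForm L 0) :=
  {φ | ¬ PosRealize M φ}

/-- A basic h-inductive sentence `∀ x̄ (φ(x̄) → ψ(x̄))` with `φ, ψ` positive.
(A general h-inductive sentence, a finite conjunction of such, is equivalent to
the set of its conjuncts.) -/
structure HInd (L : FirstOrder.Language.{u, v}) : Type (max u v) where
  n : ℕ
  hyp : PosForm L n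
  concl : PosForm L n

/-- Realization of a basic h-inductive sentence. -/
def HInd.Realize (s : HInd L) (M : Type w) [L.Structure M] : Prop :=
  ∀ v : Fin s.n → M, s.hyp.Realize v → s.concl.Realize v

/-- `M` is a model of the h-inductive theory `T`. -/
def HModels (M : Type w) [L.Structure M] (T : Set (HInd L)) : Prop :=
  ∀ s ∈ T, s.Realize M

/-- `T_i*(M)`: the set of (basic) h-inductive `L`-sentences true in `M`. -/
def TiStar (M : Type w) [L.Structure M] : Set (HInd L) :=
  {s | s.Realize M}

/-- `T_u(T)`: the h-universal consequences of `T`, identified with the set of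
positive sentences `φ` such that `¬φ` holds in every model of `T`. -/
def TuOf (T : Set (HInd L)) : Set (PosForm L 0) :=
  {φ | ∀ (M : Type (max u v)) [L.Structure M], HModels M T → ¬ PosRealize M φ}

/-- A homomorphism is an immersion if it preserves and reflects all positive
formulas. -/
def IsImmersion {A : Type w} {B : Type w'} [L.Structure A] [L.Structure B]
    (f : A →[L] B) : Prop :=
  ∀ {n : ℕ} (φ : PosForm L n) (v : Fin n → A), φ.Realize v ↔ φ.Realize (f ∘ v)

/-- A homomorphism `f : A → B` is a strong immersion if `B`, with parameters
from `A` interpreted via `f`, models `T_i(A)`, the full h-inductive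
`L(A)`-theory of `A`. -/
def IsStrongImmersion {A : Type w} {B : Type w'} [L.Structure A] [L.Structure B]
    (f : A →[L] B) : Prop :=
  ∀ {n m : ℕ} (φ ψ : PosForm L (n + m)) (a : Fin m → A),
    (∀ v : Fin n → A, φ.Realize (Fin.append v a) → ψ.Realize (Fin.append v a)) →
    ∀ v : Fin n → B, φ.Realize (Fin.append v (f ∘ a)) → ψ.Realize (Fin.append v (f ∘ a))

/-- `M` is a positively closed (pc) model of `T`: it models `T` and every
homomorphism from `M` into a model of `T` is an immersion. -/
def IsPC (T : Set (HInd L)) (M : Type (max u v)) [L.Structure M] : Prop :=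
  HModels M T ∧
    ∀ (N : Type (max u v)) [L.Structure N], HModels N T → ∀ f : M →[L] N, IsImmersion f

/-- `T` has the joint continuation property (is positively complete). -/
def JCP (T : Set (HInd L)) : Prop :=
  ∀ (A : Type (max u v)) [L.Structure A] (B : Type (max u v)) [L.Structure B],
    HModels A T → HModels B T →
      ∃ (C : Type (max u v)) (_ : L.Structure C),
        HModels C T ∧ Nonempty (A →[L] C) ∧ Nonempty (B →[L] C)

/-- `T₁` and `T₂` are `T`-complete. -/
def TComplete (T₁ T₂ T : Set (HInd L)) : Prop :=
  ∀ (A : Type (max u v)) [L.Structure A] (B : Type (max u v)) [L.Structure B],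
    HModels A T₁ → HModels B T₂ →
      ∃ (C : Type (max u v)) (_ : L.Structure C),
        HModels C T ∧ Nonempty (A →[L] C) ∧ Nonempty (B →[L] C)

/-!
Compactness. Name the elements of `B` and `C` by constants and take `T`, the positive diagrams
of `B` and `C` (with the elements of `A` identified through `f` and `g`), and `b ≠ c` for
`b ∉ f(A)`, `c ∉ g(A)`. A finite part of this theory speaks about finitely many elements of `C`
through one positive formula over `A`; since `g` reflects positive formulas, that formula has
witnesses in `A`, and sending the elements of `C` to the images of these witnesses under `f` makes
`B` a model of the finite part. A model `D` of the whole theory receives homomorphisms from `B`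
and `C` through the diagrams.
-/

theorem snoc_comp_snoc_castSucc_last {α : Type*} {n m : ℕ} (σ : Fin n → Fin m) (v : Fin m → α)
    (x : α) :
    (Fin.snoc v x : Fin (m + 1) → α) ∘ Fin.snoc (Fin.castSucc ∘ σ) (Fin.last m) =
      Fin.snoc (v ∘ σ) x := by
  funext i
  refine Fin.lastCases ?_ (fun j => ?_) i <;> simp

namespace PosForm

variable {M : Type w} {N : Type w'} [L.Structure M] [L.Structure N]

theorem realize_hom (h : M →[L] N) : ∀ {n : ℕ} (φ : PosForm L n) {v : Fin n → M},
    φ.Realize v → φ.Realize (h ∘ v)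
  | _, .falsum, _, hv => hv.elim
  | _, .equal t u, v, hv => by
      simp only [Realize, HomClass.realize_term] at hv ⊢
      rw [hv]
  | _, .rel R ts, v, hv => by
      simp only [Realize, HomClass.realize_term] at hv ⊢
      exact h.map_rel R _ hv
  | _, .and φ ψ, _, hv => ⟨realize_hom h φ hv.1, realize_hom h ψ hv.2⟩
  | _, .or φ ψ, _, hv => hv.imp (realize_hom h φ) (realize_hom h ψ)
  | _, .ex φ, _, hv => by
      obtain ⟨x, hx⟩ := hv
      exact ⟨h x, by simpa only [Fin.comp_snoc] using realize_hom h φ hx⟩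

def relabel : ∀ {n m : ℕ}, (Fin n → Fin m) → PosForm L n → PosForm L m
  | _, _, _, .falsum => .falsum
  | _, _, σ, .equal t u => .equal (t.relabel σ) (u.relabel σ)
  | _, _, σ, .rel R ts => .rel R fun i => (ts i).relabel σ
  | _, _, σ, .and φ ψ => .and (relabel σ φ) (relabel σ ψ)
  | _, _, σ, .or φ ψ => .or (relabel σ φ) (relabel σ ψ)
  | _, m, σ, .ex φ => .ex (relabel (Fin.snoc (Fin.castSucc ∘ σ) (Fin.last m)) φ)

theorem realize_relabel : ∀ {n m : ℕ} (σ : Fin n → Fin m) (φ : PosForm L n) (v : Fin m → M),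
    (φ.relabel σ).Realize v ↔ φ.Realize (v ∘ σ)
  | _, _, _, .falsum, _ => Iff.rfl
  | _, _, _, .equal t u, _ => by simp [relabel, Realize, Term.realize_relabel]
  | _, _, _, .rel R ts, _ => by simp [relabel, Realize, Term.realize_relabel]
  | _, _, σ, .and φ ψ, v => and_congr (realize_relabel σ φ v) (realize_relabel σ ψ v)
  | _, _, σ, .or φ ψ, v => or_congr (realize_relabel σ φ v) (realize_relabel σ ψ v)
  | _, m, σ, .ex φ, v => exists_congr fun x => by
      rw [realize_relabel, snoc_comp_snoc_castSucc_last]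

def exs : ∀ {m k : ℕ}, PosForm L (m + k) → PosForm L m
  | _, 0, φ => φ
  | _, k + 1, φ => exs (k := k) φ.ex

theorem realize_exs : ∀ {m k : ℕ} (φ : PosForm L (m + k)) (v : Fin m → M),
    (exs φ).Realize v ↔ ∃ w : Fin k → M, φ.Realize (Fin.append v w)
  | _, 0, φ, v => by
      refine ⟨fun h => ⟨Fin.elim0, by rwa [Fin.append_elim0]⟩, fun ⟨w, hw⟩ => ?_⟩
      rwa [Subsingleton.elim w Fin.elim0, Fin.append_elim0] at hw
  | _, k + 1, φ, v => by
      rw [exs, realize_exs φ.ex v]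
      constructor
      · rintro ⟨w, x, hx⟩
        exact ⟨Fin.snoc w x, by rwa [Fin.append_snoc]⟩
      · rintro ⟨w, hw⟩
        refine ⟨Fin.init w, w (Fin.last k), ?_⟩
        rwa [← Fin.append_snoc, Fin.snoc_init_self]

def toBoundedFormula : ∀ {n : ℕ}, PosForm L n → L.BoundedFormula Empty n
  | _, .falsum => ⊥
  | _, .equal t u => Term.bdEqual (t.relabel Sum.inr) (u.relabel Sum.inr)
  | _, .rel R ts => R.boundedFormula fun i => (ts i).relabel Sum.inr
  | _, .and φ ψ => φ.toBoundedFormula ⊓ ψ.toBoundedFormula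
  | _, .or φ ψ => φ.toBoundedFormula ⊔ ψ.toBoundedFormula
  | _, .ex φ => φ.toBoundedFormula.ex

theorem realize_toBoundedFormula : ∀ {n : ℕ} (φ : PosForm L n) (xs : Empty → M) (v : Fin n → M),
    φ.toBoundedFormula.Realize xs v ↔ φ.Realize v
  | _, .falsum, _, _ => by simp [toBoundedFormula, Realize]
  | _, .equal t u, _, _ => by simp [toBoundedFormula, Realize, Term.realize_relabel]
  | _, .rel R ts, _, _ => by simp [toBoundedFormula, Realize, Term.realize_relabel]
  | _, .and φ ψ, xs, v => by
      simp [toBoundedFormula, Realize, realize_toBoundedFormula φ xs v,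
        realize_toBoundedFormula ψ xs v]
  | _, .or φ ψ, xs, v => by
      simp [toBoundedFormula, Realize, realize_toBoundedFormula φ xs v,
        realize_toBoundedFormula ψ xs v]
  | _, .ex φ, xs, _ => by
      simp only [toBoundedFormula, Realize, BoundedFormula.realize_ex]
      exact exists_congr fun _ => realize_toBoundedFormula φ xs _

end PosForm

/-- A positive sentence with parameters from `X`: a positive formula together with an
assignment of its free variables. -/
structure PosSentence (L : FirstOrder.Language.{u, v}) (X : Type w) : Type (max u v w) where
  n : ℕ
  formula : PosForm L n
  params : Fin n → X

namespace PosSentence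

variable {X : Type w} {Y : Type w'} {M : Type*} {N : Type*} [L.Structure M] [L.Structure N]

def Realize (σ : PosSentence L X) (e : X → M) : Prop :=
  σ.formula.Realize (e ∘ σ.params)

def map (j : X → Y) (σ : PosSentence L X) : PosSentence L Y :=
  ⟨σ.n, σ.formula, j ∘ σ.params⟩

theorem realize_map (j : X → Y) (σ : PosSentence L X) (e : Y → M) :
    (σ.map j).Realize e ↔ σ.Realize (e ∘ j) :=
  Iff.rfl

theorem Realize.hom {σ : PosSentence L X} {e : X → M} (h : M →[L] N) (hσ : σ.Realize e) :
    σ.Realize (h ∘ e) :=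
  σ.formula.realize_hom h hσ

protected def and (σ τ : PosSentence L X) : PosSentence L X :=
  ⟨σ.n + τ.n, (σ.formula.relabel (Fin.castAdd τ.n)).and (τ.formula.relabel (Fin.natAdd σ.n)),
    Fin.append σ.params τ.params⟩

theorem realize_and (σ τ : PosSentence L X) (e : X → M) :
    (σ.and τ).Realize e ↔ σ.Realize e ∧ τ.Realize e := by
  have hσ : Fin.append σ.params τ.params ∘ Fin.castAdd τ.n = σ.params :=
    funext (Fin.append_left _ _)
  have hτ : Fin.append σ.params τ.params ∘ Fin.natAdd σ.n = τ.params :=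
    funext (Fin.append_right _ _)
  simp only [Realize, PosSentence.and, PosForm.Realize, PosForm.realize_relabel,
    Function.comp_assoc, hσ, hτ]

theorem realize_foldr_and (l : List (PosSentence L X)) (σ : PosSentence L X) (e : X → M) :
    (l.foldr PosSentence.and σ).Realize e ↔ σ.Realize e ∧ ∀ τ ∈ l, τ.Realize e := by
  induction l with
  | nil => simp
  | cons τ l ih =>
    rw [List.foldr_cons, realize_and, ih, List.forall_mem_cons]
    tauto

protected def eq (x y : X) : PosSentence L X :=
  ⟨2, .equal (.var 0) (.var 1), ![x, y]⟩

theorem realize_eq (x y : X) (e : X → M) :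
    (PosSentence.eq x y : PosSentence L X).Realize e ↔ e x = e y :=
  Iff.rfl

def toSentence (σ : PosSentence L X) : L[[X]].Sentence :=
  ((L.lhomWithConstants X).onFormula σ.formula.toBoundedFormula.toFormula).subst
    (Sum.elim Empty.elim fun i => (L.con (σ.params i)).term)

theorem realize_toSentence (M : Type*) [L.Structure M] [L[[X]].Structure M]
    [(L.lhomWithConstants X).IsExpansionOn M] (σ : PosSentence L X) :
    M ⊨ σ.toSentence ↔ σ.Realize fun x => (L.con x : M) := by
  rw [toSentence, Sentence.Realize, Formula.Realize, BoundedFormula.realize_subst]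
  change Formula.Realize _ _ ↔ _
  rw [LHom.realize_onFormula, BoundedFormula.realize_toFormula,
    PosForm.realize_toBoundedFormula]
  simp only [Realize, Function.comp_def, Sum.elim_inr, Term.realize_constants]

end PosSentence

def HInd.toSentence (s : HInd L) : L.Sentence :=
  (s.hyp.toBoundedFormula.imp s.concl.toBoundedFormula).alls

theorem HInd.realize_toSentence (M : Type*) [L.Structure M] (s : HInd L) :
    M ⊨ s.toSentence ↔ s.Realize M := by
  rw [HInd.toSentence, Sentence.Realize, BoundedFormula.realize_alls]
  simp only [BoundedFormula.realize_imp, PosForm.realize_toBoundedFormula, HInd.Realize]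

section Homomorphisms

variable {X : Type*} {M : Type*} {N : Type*} [L.Structure X] [L.Structure M] [L.Structure N]

theorem exists_hom_of_forall_realize (e : X → M)
    (h : ∀ σ : PosSentence L X, σ.Realize id → σ.Realize e) : ∃ φ : X →[L] M, ⇑φ = e := by
  refine ⟨⟨e, fun {n} F v => ?_, fun {n} R v hv => ?_⟩, rfl⟩
  · have hF := h ⟨n + 1, .equal (.func F fun i => .var i.castSucc) (.var (Fin.last n)),
      Fin.snoc v (Structure.funMap F v)⟩ (by simp [PosSentence.Realize, PosForm.Realize])
    simpa [PosSentence.Realize, PosForm.Realize, Function.comp_def] using hF.symm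
  · simpa [PosSentence.Realize, PosForm.Realize, Function.comp_def] using h ⟨n, .rel R .var, v⟩ hv

theorem posTheory_subset_of_hom (h : M →[L] N) : posTheory (L := L) M ⊆ posTheory N :=
    fun φ hφ => by
  simpa only [posTheory, PosRealize, Set.mem_ofPred_eq, Subsingleton.elim (h ∘ Fin.elim0) Fin.elim0]
    using φ.realize_hom h hφ

theorem IsImmersion.posTheory_eq {h : M →[L] N} (hh : IsImmersion h) :
    posTheory (L := L) M = posTheory N := by
  ext φ
  simpa only [posTheory, PosRealize, Set.mem_ofPred_eq, Subsingleton.elim (h ∘ Fin.elim0) Fin.elim0]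
    using hh φ Fin.elim0

theorem nonempty_iff_mem_posTheory :
    Nonempty M ↔ (.ex (.equal (.var 0) (.var 0)) : PosForm L 0) ∈ posTheory M := by
  simp [posTheory, PosRealize, PosForm.Realize]

theorem exists_hom_of_isEmpty [IsEmpty X] (h : posTheory (L := L) X ⊆ posTheory M) :
    Nonempty (X →[L] M) := by
  refine (exists_hom_of_forall_realize (isEmptyElim : X → M) fun σ hσ => ?_).nonempty
  obtain ⟨_ | n, φ, v⟩ := σ
  · have hφ : φ ∈ posTheory X := by
      rwa [PosSentence.Realize, Subsingleton.elim (id ∘ v) Fin.elim0] at hσ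
    rw [PosSentence.Realize, Subsingleton.elim (_ ∘ v) Fin.elim0]
    exact h hφ
  · exact isEmptyElim (v 0)

end Homomorphisms

theorem exists_fin_injective_comp_eq {X : Type*} {n : ℕ} (u : Fin n → X) :
    ∃ (k : ℕ) (s : Fin k → X) (ρ : Fin n → Fin k), Function.Injective s ∧ s ∘ ρ = u := by
  classical
  let e := (Finset.univ.image u).equivFin
  refine ⟨_, fun k => (e.symm k : X), fun i => e ⟨u i, by simp⟩,
    Subtype.val_injective.comp e.symm.injective, ?_⟩
  funext i
  simp

section Witness

variable {A : Type*} {C : Type*} [L.Structure A] [L.Structure C] [Nonempty A] {g : A →[L] C}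

theorem IsImmersion.exists_realize (hg : IsImmersion g) (σ : PosSentence L (C ⊕ A))
    (hσ : σ.Realize (Sum.elim id g)) : ∃ κ : C → A, σ.Realize (Sum.elim κ id) := by
  obtain ⟨n, φ, v⟩ := σ
  change φ.Realize _ at hσ
  change ∃ κ, φ.Realize _
  -- Quantify existentially over the distinct elements of `C` occurring in `σ` (listed by `s`),
  -- keeping those of `A` as parameters; witnesses in `A` then define a function on `C`.
  obtain ⟨k, s, ρ, hs, hsρ⟩ := exists_fin_injective_comp_eq (Sum.elim id g ∘ v)
  inhabit A
  let p : Fin n → A := fun i => Sum.elim (fun _ => default) id (v i)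
  let τ : Fin n → Fin (n + k) := fun i =>
    Sum.elim (fun _ => Fin.natAdd n (ρ i)) (fun _ => Fin.castAdd k i) (v i)
  have hC : (PosForm.exs (φ.relabel τ)).Realize (g ∘ p) := by
    refine (PosForm.realize_exs _ _).2 ⟨s, (PosForm.realize_relabel _ _ _).2 ?_⟩
    convert hσ using 1
    funext i
    rcases h : v i with c | a
    · simpa [τ, h] using congrFun hsρ i
    · simp [τ, p, h]
  obtain ⟨e, he⟩ := (PosForm.realize_exs _ _).1 ((hg _ p).2 hC)
  refine ⟨Function.extend s e default, ?_⟩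
  rw [PosForm.realize_relabel] at he
  convert he using 1
  funext i
  rcases h : v i with c | a
  · have hc : s (ρ i) = c := by simpa [h] using congrFun hsρ i
    simp [τ, h, ← hc, hs.extend_apply]
  · simp [τ, p, h]

theorem IsImmersion.exists_forall_realize (hg : IsImmersion g) (F : Finset (PosSentence L (C ⊕ A)))
    (hF : ∀ σ ∈ F, σ.Realize (Sum.elim id g)) :
    ∃ κ : C → A, ∀ σ ∈ F, σ.Realize (Sum.elim κ id) := by
  inhabit A
  let σ₀ : PosSentence L (C ⊕ A) := .eq (.inr default) (.inr default)
  obtain ⟨κ, hκ⟩ := hg.exists_realize (F.toList.foldr PosSentence.and σ₀)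
    ((PosSentence.realize_foldr_and _ _ _).2 ⟨rfl, fun σ hσ => hF σ (Finset.mem_toList.1 hσ)⟩)
  exact ⟨κ, fun σ hσ => ((PosSentence.realize_foldr_and _ _ _).1 hκ).2 σ (Finset.mem_toList.2 hσ)⟩

end Witness

theorem isSatisfiable_union_image_of_forall_finset {L' : FirstOrder.Language} {ι : Type*}
    (T₀ : L'.Theory) (S : Set ι) (φ : ι → L'.Sentence)
    (h : ∀ F : Finset ι, ↑F ⊆ S → (T₀ ∪ φ '' F).IsSatisfiable) : (T₀ ∪ φ '' S).IsSatisfiable := by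
  classical
  rw [Theory.isSatisfiable_iff_isFinitelySatisfiable]
  intro T0 hT0
  obtain ⟨F, hFS, hF⟩ := Finset.subset_set_image_iff.1
    (show ↑(T0.filter (· ∉ T₀)) ⊆ φ '' S from fun ψ hψ => by
      rw [Finset.coe_filter] at hψ
      exact (hT0 hψ.1).resolve_left hψ.2)
  refine (h F hFS).mono fun ψ hψ => ?_
  by_cases hψT : ψ ∈ T₀
  · exact Or.inl hψT
  · refine Or.inr ?_
    rw [← Finset.coe_image, hF]
    simpa using ⟨hψ, hψT⟩

section Amalgamation

variable {A B C : Type*} [L.Structure A] [L.Structure B] [L.Structure C]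

/-- `T ∪ Diag⁺(B) ∪ Diag⁺(C) ∪ {b ≠ c : b ∉ f(A), c ∉ g(A)}` in `L(B ⊕ C)`, where `Diag⁺(C)`
has parameters from `C ⊕ A`, those from `A` named through `f`; this identifies `g a` with `f a`. -/
def amalgamationTheory (T : Set (HInd L)) (f : A →[L] B) (g : A →[L] C) :
    L[[B ⊕ C]].Theory :=
  ((L.lhomWithConstants (B ⊕ C)).onTheory (HInd.toSentence '' T) ∪
      (fun σ : PosSentence L B => (σ.map Sum.inl).toSentence) '' {σ | σ.Realize id} ∪
      {ψ | ∃ b ∉ Set.range f, ∃ c ∉ Set.range g,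
        ψ = (PosSentence.eq (L := L) (Sum.inl b) (Sum.inr c)).toSentence.not}) ∪
    (fun σ : PosSentence L (C ⊕ A) => (σ.map (Sum.elim Sum.inr (Sum.inl ∘ f))).toSentence) ''
      {σ | σ.Realize (Sum.elim id g)}

theorem isSatisfiable_amalgamationTheory [Nonempty A] {T : Set (HInd L)} (hB : HModels B T)
    (f : A →[L] B) {g : A →[L] C} (hg : IsImmersion g) :
    (amalgamationTheory T f g).IsSatisfiable := by
  refine isSatisfiable_union_image_of_forall_finset _ _ _ fun F hF => ?_
  obtain ⟨κ, hκ⟩ := hg.exists_forall_realize F hF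
  -- `B` is a model once `c` is interpreted as `f (κ c)`: these values lie in `f(A)`, so they
  -- differ from every `b ∉ f(A)`.
  let : (constantsOn (B ⊕ C)).Structure B := constantsOn.structure (Sum.elim id (f ∘ κ))
  have : Nonempty B := .map f ‹_›
  have : B ⊨ (L.lhomWithConstants (B ⊕ C)).onTheory (HInd.toSentence '' T) := by
    refine (LHom.onTheory_model _ _).2 (Theory.model_iff _ |>.2 ?_)
    rintro _ ⟨s, hs, rfl⟩
    exact (HInd.realize_toSentence B s).2 (hB s hs)
  refine @Theory.Model.isSatisfiable _ _ B _ _ (Theory.model_iff _ |>.2 ?_)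
  rintro ψ (((hψ | ⟨σ, hσ, rfl⟩) | ⟨b, hb, c, -, rfl⟩) | ⟨σ, hσ, rfl⟩)
  · exact Theory.realize_sentence_of_mem _ hψ
  · exact (PosSentence.realize_toSentence B _).2 hσ
  · rw [Sentence.realize_not, PosSentence.realize_toSentence]
    exact fun hbc => hb ⟨κ c, hbc.symm⟩
  · rw [PosSentence.realize_toSentence, PosSentence.realize_map]
    convert (hκ σ hσ).hom f using 2
    funext x
    rcases x with c | a <;> rfl

theorem exists_amalgam_of_model {T : Set (HInd L)} {f : A →[L] B} {g : A →[L] C} (M : Type*)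
    [L.Structure M] [L[[B ⊕ C]].Structure M] [(L.lhomWithConstants (B ⊕ C)).IsExpansionOn M]
    [M ⊨ amalgamationTheory T f g] :
    ∃ (f' : B →[L] M) (g' : C →[L] M), HModels M T ∧ f'.comp f = g'.comp g ∧
      ∀ b c, b ∉ Set.range f → c ∉ Set.range g → f' b ≠ g' c := by
  have hM : ∀ ψ ∈ amalgamationTheory T f g, M ⊨ ψ := fun _ => Theory.realize_sentence_of_mem _
  obtain ⟨f', hf'⟩ := exists_hom_of_forall_realize (fun b => (L.con (Sum.inl b : B ⊕ C) : M))
    fun σ hσ => (PosSentence.realize_toSentence M _).1 (hM _ (.inl (.inl (.inr ⟨σ, hσ, rfl⟩))))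
  obtain ⟨g', hg'⟩ := exists_hom_of_forall_realize (fun c => (L.con (Sum.inr c : B ⊕ C) : M))
    fun σ hσ => (PosSentence.realize_toSentence M _).1 (hM _ (.inr ⟨σ.map Sum.inl, hσ, rfl⟩))
  refine ⟨f', g', fun s hs => ?_, Hom.ext fun a => ?_, fun b c hb hc => ?_⟩
  · have := hM _ (.inl (.inl (.inl ⟨_, ⟨s, hs, rfl⟩, rfl⟩)))
    rwa [LHom.realize_onSentence, HInd.realize_toSentence] at this
  · have := hM _ (.inr ⟨.eq (.inl (g a)) (.inr a), rfl, rfl⟩)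
    rw [PosSentence.realize_toSentence, PosSentence.realize_map, PosSentence.realize_eq] at this
    simpa [hf', hg'] using this.symm
  · have := hM _ (.inl (.inr ⟨b, hb, c, hc, rfl⟩))
    rw [Sentence.realize_not, PosSentence.realize_toSentence, PosSentence.realize_eq] at this
    simpa [hf', hg'] using this

end Amalgamation

theorem strong_amalgamation_of_immersions_general (T : Set (HInd L))
    (A B C : Type (max u v)) [L.Structure A] [L.Structure B] [L.Structure C]
    (hB : HModels B T)
    (f : A →[L] B) (g : A →[L] C) (hg : IsImmersion g) :
    ∃ (D : Type (max u v)) (_ : L.Structure D) (f' : B →[L] D) (g' : C →[L] D),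
      HModels D T ∧ f'.comp f = g'.comp g ∧
        ∀ b c, b ∉ Set.range f → c ∉ Set.range g → f' b ≠ g' c := by
  -- Compactness only provides nonempty models; if `A` is empty, so is `C`, and `B` itself works.
  by_cases hA : Nonempty A
  · obtain ⟨M⟩ := isSatisfiable_amalgamationTheory hB f hg
    let : L.Structure M := (L.lhomWithConstants (B ⊕ C)).reduct M
    exact ⟨M, _, exists_amalgam_of_model M⟩
  · have : IsEmpty A := not_nonempty_iff.1 hA
    have : IsEmpty C := not_nonempty_iff.1 fun hC => hA <| by
      rwa [nonempty_iff_mem_posTheory (L := L), hg.posTheory_eq, ← nonempty_iff_mem_posTheory]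
    obtain ⟨g'⟩ := exists_hom_of_isEmpty (hg.posTheory_eq.symm.subset.trans
      (posTheory_subset_of_hom f))
    exact ⟨B, _, Hom.id L B, g', hB, Hom.ext isEmptyElim, fun _ c => isEmptyElim c⟩

/-- strong amalgamation of two immersions over models of `T`. -/
theorem strong_amalgamation_of_immersions (T : Set (HInd L))
    (A B C : Type (max u v)) [L.Structure A] [L.Structure B] [L.Structure C]
    (hA : HModels A T) (hB : HModels B T) (hC : HModels C T)
    (f : A →[L] B) (g : A →[L] C) (hf : IsImmersion f) (hg : IsImmersion g) :
    ∃ (D : Type (max u v)) (_ : L.Structure D) (f' : B →[L] D) (g' : C →[L] D),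
      HModels D T ∧ f'.comp f = g'.comp g ∧
        ∀ b c, b ∉ Set.range f → c ∉ Set.range g → f' b ≠ g' c :=
  strong_amalgamation_of_immersions_general T A B C hB f g hg
end PositiveLogic
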